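/- arXiv:1309.3441 — 2 statements merged into one kernel-verified Lean document; each statement's English description precedes it below -/
import Mathlib

section
/- For every n > 0 and k ≥ 1 there exists a word w of length N = k^n + n − 1 over an alphabet A_k with k letters that contains every one of the k^n words of length n over A_k as a subword, each occurring exactly once; consequently p_w(n) = k^n. -/
/-- The subword complexity of a finite word `w`: the number of distinct
subwords (contiguous factors) of `w` of length `n`. -/
noncomputable def complexity {A : Type*} (w : List A) (n : ℕ) : ℕ :=
  Set.ncard {u : List A | u.length = n ∧ u <:+: w}

/-- The number of occurrences of `u` in `w`: the number of starting positions
`i` at which the contiguous block of `w` of length `|u|` equals `u`. -/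
noncomputable def occCount {A : Type*} (w u : List A) : ℕ :=
  Set.ncard {i : ℕ | i + u.length ≤ w.length ∧ (w.drop i).take u.length = u}

/-!
Take a longest word `w` whose factors of length `n = m + 1` are pairwise distinct; there are
at most `k ^ n` of them. By maximality, the suffix `s` of length `m` is followed somewhere in `w`
by every letter. These `k` occurrences of `s`, together with the final one, are `k + 1`
occurrences of `s`, and distinct factors of length `n` cannot put the same letter in front of two
of them; so one of them is at position `0`, i.e. `s` is also the prefix of `w`, and `w` is a
cyclic word unrolled. Each of its rotations is again a longest word, so every factor of length `m`
is followed by every letter, and shifting in one letter at a time reaches every word of length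
`n`. Then each word of length `n` occurs exactly once and `|w| = k ^ n + n - 1`.
-/

open Function

namespace DeBruijn

variable {A : Type*}

def window (w : List A) (i ℓ : ℕ) : List A := (w.drop i).take ℓ

def HasDistinctWindows (w : List A) (n : ℕ) : Prop :=
  Set.InjOn (window w · n) {i | i + n ≤ w.length}

def IsLongest (w : List A) (n : ℕ) : Prop :=
  HasDistinctWindows w n ∧ ∀ v : List A, HasDistinctWindows v n → v.length ≤ w.length

def segment (g : ℕ → A) (c N : ℕ) : List A := List.ofFn fun j : Fin N => g (c + j)

section Window

variable {w : List A} {i ℓ m : ℕ}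

theorem length_window (h : i + ℓ ≤ w.length) : (window w i ℓ).length = ℓ := by
  simp only [window, List.length_take, List.length_drop]
  omega

theorem window_infix (w : List A) (i ℓ : ℕ) : window w i ℓ <:+: w :=
  (List.take_prefix ℓ _).isInfix.trans (List.drop_suffix i w).isInfix

theorem window_zero_left : window w 0 ℓ = w.take ℓ := by
  simp [window]

theorem window_eq_drop (h : w.length ≤ i + ℓ) : window w i ℓ = w.drop i :=
  List.take_of_length_le (by simp only [List.length_drop]; omega)

theorem take_window (h : ℓ ≤ m) : (window w i m).take ℓ = window w i ℓ := by
  rw [window, List.take_take, min_eq_left h, window]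

theorem window_succ_left : window w (i + 1) ℓ = (window w i (ℓ + 1)).drop 1 := by
  simp [window, List.drop_take, List.drop_drop]

theorem window_succ_right (h : i < w.length) :
    window w i (ℓ + 1) = w[i] :: window w (i + 1) ℓ := by
  rw [window, List.drop_eq_getElem_cons h, List.take_succ_cons, window]

theorem window_append_of_le (h : i + ℓ ≤ w.length) (v : List A) :
    window (w ++ v) i ℓ = window w i ℓ := by
  rw [window, List.drop_append_of_le_length (by omega),
    List.take_append_of_le_length (by simp only [List.length_drop]; omega), window]

theorem window_append_singleton_last (h : m ≤ w.length) (a : A) :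
    window (w ++ [a]) (w.length - m) (m + 1) = w.drop (w.length - m) ++ [a] := by
  rw [window_eq_drop (by simp only [List.length_append, List.length_singleton]; omega),
    List.drop_append_of_le_length (by omega)]

end Window

section Segment

variable {g : ℕ → A} {L : ℕ}

@[simp]
theorem length_segment (g : ℕ → A) (c N : ℕ) : (segment g c N).length = N := by
  simp [segment]

theorem window_segment {c N j ℓ : ℕ} (h : j + ℓ ≤ N) :
    window (segment g c N) j ℓ = segment g (c + j) ℓ := by
  apply List.ext_getElem (by rw [length_window (by simpa using h), length_segment])
  intro r _ _
  simp [window, segment, Nat.add_assoc]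

theorem segment_mod (hg : Periodic g L) (c ℓ : ℕ) :
    segment g (c % L) ℓ = segment g c ℓ := by
  simp only [segment, List.ofFn_inj]
  funext r
  rw [← hg.map_mod_nat, Nat.mod_add_mod, hg.map_mod_nat]

theorem segment_add_period (hg : Periodic g L) (c ℓ : ℕ) :
    segment g (c + L) ℓ = segment g c ℓ := by
  rw [← segment_mod hg, Nat.add_mod_right, segment_mod hg]

/-- With `g` of period `L`, `segment g c (L + m)` is the rotation by `c` of a cyclic word of
length `L`, unrolled so that its factors of length `m + 1` are its cyclic factors. -/
theorem HasDistinctWindows.segment_rotate {m : ℕ} (hg : Periodic g L) (hL : 0 < L)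
    (h : HasDistinctWindows (segment g 0 (L + m)) (m + 1)) (c : ℕ) :
    HasDistinctWindows (segment g c (L + m)) (m + 1) := by
  intro j₁ hj₁ j₂ hj₂ heq
  simp only [Set.mem_ofPred_eq, length_segment] at hj₁ hj₂ heq
  rw [window_segment hj₁, window_segment hj₂, ← segment_mod hg,
    ← segment_mod hg (c + j₂)] at heq
  have h₁ := Nat.mod_lt (c + j₁) hL
  have h₂ := Nat.mod_lt (c + j₂) hL
  have hmod : (c + j₁) % L = (c + j₂) % L := by
    refine h (by simp; omega) (by simp; omega) ?_
    simpa only [window_segment (show (c + j₁) % L + (m + 1) ≤ L + m by omega),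
      window_segment (show (c + j₂) % L + (m + 1) ≤ L + m by omega), Nat.zero_add] using heq
  have := Nat.ModEq.add_left_cancel' c hmod
  rwa [Nat.ModEq, Nat.mod_eq_of_lt (by omega), Nat.mod_eq_of_lt (by omega)] at this

theorem eq_segment_of_take_eq_drop {w : List A} {m : ℕ} (hL : 0 < L) (hw : w.length = L + m)
    (h : w.take m = w.drop L) (a : A) :
    w = segment (fun j => w.getD (j % L) a) 0 (L + m) := by
  have getElem_eq_getD_mod : ∀ j (hj : j < w.length), w[j] = w.getD (j % L) a := by
    intro j
    induction j using Nat.strong_induction_on with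
    | _ j ih =>
      intro hj
      rcases Nat.lt_or_ge j L with hjL | hjL
      · rw [Nat.mod_eq_of_lt hjL, List.getD_eq_getElem]
      · have hshift : w[j] = w[j - L] := by
          calc w[j] = (w.drop L)[j - L]'(by simp; omega) := by simp [Nat.add_sub_cancel' hjL]
            _ = (w.take m)[j - L]'(by simp; omega) := by simp only [h]
            _ = w[j - L] := List.getElem_take ..
        rw [hshift, ih (j - L) (by omega) (by omega), Nat.mod_eq_sub_mod hjL]
  apply List.ext_getElem (by simp [hw])
  intro j hj _
  simp [segment, getElem_eq_getD_mod j hj]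

end Segment

section Longest

variable {w : List A} {m : ℕ}

theorem IsLongest.le_length {n : ℕ} (hw : IsLongest w n) (a : A) : n ≤ w.length := by
  simpa using hw.2 (List.replicate n a) fun i hi j hj _ => by simp at hi hj; omega

theorem HasDistinctWindows.append_singleton (hw : HasDistinctWindows w (m + 1)) {a : A}
    (ha : ∀ i, i + (m + 1) ≤ w.length → window w i (m + 1) ≠ w.drop (w.length - m) ++ [a]) :
    HasDistinctWindows (w ++ [a]) (m + 1) := by
  intro i hi j hj hij
  simp only [Set.mem_ofPred_eq, List.length_append, List.length_singleton] at hi hj hij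
  obtain hi' | rfl : i + (m + 1) ≤ w.length ∨ i = w.length - m := by omega
  · obtain hj' | rfl : j + (m + 1) ≤ w.length ∨ j = w.length - m := by omega
    · rw [window_append_of_le hi', window_append_of_le hj'] at hij
      exact hw hi' hj' hij
    · rw [window_append_of_le hi', window_append_singleton_last (by omega)] at hij
      exact absurd hij (ha i hi')
  · obtain hj' | rfl : j + (m + 1) ≤ w.length ∨ j = w.length - m := by omega
    · rw [window_append_of_le hj', window_append_singleton_last (by omega)] at hij
      exact absurd hij.symm (ha j hj')
    · rfl

theorem IsLongest.exists_window_eq_drop_append (hw : IsLongest w (m + 1)) (a : A) :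
    ∃ i, i + (m + 1) ≤ w.length ∧ window w i (m + 1) = w.drop (w.length - m) ++ [a] := by
  by_contra! h
  simpa using hw.2 _ (hw.1.append_singleton h)

/-- The letters in front of the occurrences of `t` are pairwise distinct. -/
theorem HasDistinctWindows.card_le_of_occurrences [Fintype A] {ι : Type*} [Fintype ι]
    (hw : HasDistinctWindows w (m + 1)) {t : List A} {p : ι → ℕ} (hp : Injective p)
    (hpos : ∀ x, 0 < p x) (hle : ∀ x, p x + m ≤ w.length) (ht : ∀ x, window w (p x) m = t) :
    Fintype.card ι ≤ Fintype.card A := by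
  have hlt : ∀ x, p x - 1 < w.length := fun x => by have := hpos x; have := hle x; omega
  have hcons : ∀ x, window w (p x - 1) (m + 1) = w[p x - 1]'(hlt x) :: t := fun x => by
    rw [window_succ_right, Nat.sub_add_cancel (hpos x), ht]
  refine Fintype.card_le_of_injective (fun x => w[p x - 1]'(hlt x)) fun x y hxy => hp ?_
  have := hw (show p x - 1 + (m + 1) ≤ w.length by have := hpos x; have := hle x; omega)
    (show p y - 1 + (m + 1) ≤ w.length by have := hpos y; have := hle y; omega)
    (by simp only [hcons, hxy])
  have := hpos x; have := hpos y
  omega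

theorem IsLongest.take_eq_drop [Fintype A] (hw : IsLongest w (m + 1)) :
    w.take m = w.drop (w.length - m) := by
  by_contra hne
  have hm : m ≤ w.length := by
    by_contra hlt
    exact hne (by rw [List.take_of_length_le (by omega), Nat.sub_eq_zero_of_le (by omega),
      List.drop_zero])
  choose q hq_le hq using hw.exists_window_eq_drop_append
  set s := w.drop (w.length - m)
  -- `card A + 1` occurrences of `s`, none of them at position `0`
  let p : Option A → ℕ := fun o => o.elim (w.length - m) q
  have hocc : ∀ x, window w (p x) m = s := by
    rintro (_ | a)
    · exact window_eq_drop (show w.length ≤ w.length - m + m by omega)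
    · rw [← take_window m.le_succ]
      exact (congrArg (List.take m) (hq a)).trans (List.take_left' (by simp [s]; omega))
  have hp : Injective p := by
    rintro (_ | a) (_ | b) h
    · rfl
    · have := hq_le b; simp only [p, Option.elim] at h; omega
    · have := hq_le a; simp only [p, Option.elim] at h; omega
    · have hab := hq a
      simp only [p, Option.elim] at h
      rw [h, hq b] at hab
      simpa using hab.symm
  have hpos : ∀ x, 0 < p x := fun x => Nat.pos_of_ne_zero fun h0 => hne <| by
    rw [← window_zero_left, ← h0, hocc]
  have hle : ∀ x, p x + m ≤ w.length := by
    rintro (_ | a)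
    · simp only [p, Option.elim]; omega
    · have := hq_le a; simp only [p, Option.elim]; omega
  have := hw.1.card_le_of_occurrences hp hpos hle hocc
  simp at this

/-- The rotation of the cyclic word `w` that ends with `window w i m` is again longest. -/
theorem IsLongest.exists_window_eq_window_append [Fintype A] (hw : IsLongest w (m + 1))
    {i : ℕ} (hi : i + m ≤ w.length) (a : A) :
    ∃ j, j + (m + 1) ≤ w.length ∧ window w j (m + 1) = window w i m ++ [a] := by
  have hlen := hw.le_length a
  obtain ⟨L, hL⟩ : ∃ L, w.length = L + m := ⟨w.length - m, by omega⟩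
  set g : ℕ → A := fun j => w.getD (j % L) a
  have hg : Periodic g L := fun j => by simp [g]
  have hwg : w = segment g 0 (L + m) :=
    eq_segment_of_take_eq_drop (by omega) hL (by simpa [hL] using hw.take_eq_drop) a
  have hwin : ∀ x ℓ, x + ℓ ≤ L + m → window w x ℓ = segment g x ℓ := fun x ℓ h => by
    rw [hwg, window_segment h, Nat.zero_add]
  set v := segment g i (L + m)
  have hv : IsLongest v (m + 1) :=
    ⟨(hwg ▸ hw.1).segment_rotate hg (by omega) i,
      fun u hu => by simpa [v, hL] using hw.2 u hu⟩
  obtain ⟨j, hj, hvj⟩ := hv.exists_window_eq_drop_append a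
  have hjL : (i + j) % L < L := Nat.mod_lt _ (by omega)
  refine ⟨(i + j) % L, by omega, ?_⟩
  simp only [v, length_segment] at hj hvj
  rw [hwin _ _ (by omega), segment_mod hg, ← window_segment (by omega), hvj, hwin _ _ (by omega),
    Nat.add_sub_cancel, ← window_eq_drop (ℓ := m) (by simp), window_segment (by omega),
    segment_add_period hg]

theorem exists_window_eq_of_forall_extend (hm : m ≤ w.length)
    (hext : ∀ i, i + m ≤ w.length → ∀ a : A,
      ∃ j, j + (m + 1) ≤ w.length ∧ window w j (m + 1) = window w i m ++ [a])
    {t : List A} (ht : t.length = m) : ∃ i, i + m ≤ w.length ∧ window w i m = t := by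
  suffices h : ∀ z : List A, z.length ≤ m →
      ∃ i, i + m ≤ w.length ∧ window w i m = (window w 0 m).drop z.length ++ z by
    obtain ⟨i, hi, hit⟩ := h t ht.le
    exact ⟨i, hi, by rwa [List.drop_eq_nil_of_le (by rw [length_window (by omega)]; omega),
      List.nil_append] at hit⟩
  intro z
  induction z using List.reverseRecOn with
  | nil => exact fun _ => ⟨0, by omega, by simp⟩
  | append_singleton z a ih =>
    intro hz
    simp only [List.length_append, List.length_singleton] at hz ⊢
    obtain ⟨i, hi, hiz⟩ := ih (by omega)
    obtain ⟨j, hj, hja⟩ := hext i hi a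
    refine ⟨j + 1, by omega, ?_⟩
    rw [window_succ_left, hja, hiz, List.append_assoc,
      List.drop_append_of_le_length
        (by simp [length_window (show 0 + m ≤ w.length by omega)]; omega),
      List.drop_drop, Nat.add_comm]

theorem IsLongest.exists_window_eq [Fintype A] (hw : IsLongest w (m + 1)) {u : List A}
    (hu : u.length = m + 1) : ∃ i, i + (m + 1) ≤ w.length ∧ window w i (m + 1) = u := by
  obtain ⟨t, a, rfl⟩ : ∃ t a, u = t ++ [a] := by
    rcases u.eq_nil_or_concat with rfl | ⟨t, a, rfl⟩
    · simp at hu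
    · exact ⟨t, a, List.concat_eq_append ..⟩
  simp only [List.length_append, List.length_singleton, Nat.add_right_cancel_iff] at hu
  have hm : m ≤ w.length := by have := hw.le_length a; omega
  obtain ⟨i, hi, rfl⟩ := exists_window_eq_of_forall_extend hm
    (fun i hi b => hw.exists_window_eq_window_append hi b) hu
  exact hw.exists_window_eq_window_append hi a

end Longest

section Counting

variable {w : List A} {n : ℕ}

def windowVector (w : List A) (n : ℕ) (i : Fin (w.length + 1 - n)) : List.Vector A n :=
  ⟨window w i n, length_window (by have := i.isLt; omega)⟩

theorem HasDistinctWindows.length_add_one_sub_le [Fintype A] (hw : HasDistinctWindows w n) :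
    w.length + 1 - n ≤ Fintype.card A ^ n := by
  simpa using Fintype.card_le_of_injective (windowVector w n) fun i j h =>
    Fin.ext (hw (by have := i.isLt; simp; omega) (by have := j.isLt; simp; omega)
      (congrArg Subtype.val h))

theorem card_pow_le_of_forall_window [Fintype A]
    (h : ∀ u : List A, u.length = n → ∃ i, i + n ≤ w.length ∧ window w i n = u) :
    Fintype.card A ^ n ≤ w.length + 1 - n := by
  simpa using Fintype.card_le_of_surjective (windowVector w n) fun u => by
    obtain ⟨i, hi, hiu⟩ := h u.1 u.2
    exact ⟨⟨i, by omega⟩, Subtype.ext hiu⟩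

theorem exists_isLongest (A : Type*) [Fintype A] (n : ℕ) : ∃ w : List A, IsLongest w n := by
  have hfin : {w : List A | HasDistinctWindows w n}.Finite :=
    (List.finite_length_le A (Fintype.card A ^ n + n)).subset fun w hw => by
      have := HasDistinctWindows.length_add_one_sub_le hw
      simp only [Set.mem_ofPred_eq]
      omega
  have hnil : HasDistinctWindows ([] : List A) n := fun i hi j hj _ => by
    simp at hi hj
    omega
  obtain ⟨w, hw, hmax⟩ := Set.exists_max_image _ List.length hfin ⟨[], hnil⟩
  exact ⟨w, hw, hmax⟩

theorem occCount_eq_one {u : List A} (hw : HasDistinctWindows w n) (hu : u.length = n)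
    (h : ∃ i, i + n ≤ w.length ∧ window w i n = u) : occCount w u = 1 := by
  obtain ⟨i, hi, hiu⟩ := h
  rw [occCount, Set.ncard_eq_one, hu]
  exact ⟨i, Set.eq_singleton_iff_unique_mem.2
    ⟨⟨hi, hiu⟩, fun j hj => hw hj.1 hi (hj.2.trans hiu.symm)⟩⟩

theorem complexity_eq_card_pow [Fintype A] (h : ∀ u : List A, u.length = n → u <:+: w) :
    complexity w n = Fintype.card A ^ n := by
  have hset : {u : List A | u.length = n ∧ u <:+: w} = {u | u.length = n} :=
    Set.ext fun u => and_iff_left_of_imp (h u)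
  rw [complexity, hset, ← Nat.card_coe_set_eq]
  exact (Nat.card_eq_fintype_card (α := List.Vector A n)).trans (card_vector n)

end Counting

end DeBruijn

open DeBruijn in
/-- For every `n > 0` and alphabet with `k ≥ 1` letters, there is a word of
length `k^n + n - 1` containing each of the `k^n` words of length `n` as a
subword exactly once; consequently its complexity at `n` is `k^n`. -/
theorem exists_word_all_factors_once {A : Type*} [Fintype A] (k n : ℕ)
    (hk : Fintype.card A = k) (hk1 : 1 ≤ k) (hn : 0 < n) :
    ∃ w : List A, w.length = k ^ n + n - 1 ∧
      (∀ u : List A, u.length = n → occCount w u = 1) ∧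
      complexity w n = k ^ n := by
  obtain ⟨m, rfl⟩ : ∃ m, n = m + 1 := ⟨n - 1, by omega⟩
  obtain ⟨w, hw⟩ := exists_isLongest A (m + 1)
  have hall : ∀ u : List A, u.length = m + 1 →
      ∃ i, i + (m + 1) ≤ w.length ∧ window w i (m + 1) = u :=
    fun u hu => hw.exists_window_eq hu
  have hle := hw.1.length_add_one_sub_le
  have hge := card_pow_le_of_forall_window hall
  subst hk
  have := Nat.one_le_pow (m + 1) _ hk1
  refine ⟨w, by omega, fun u hu => occCount_eq_one hw.1 hu (hall u hu),
    complexity_eq_card_pow ?_⟩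
  intro u hu
  obtain ⟨i, -, rfl⟩ := hall u hu
  exact window_infix w i (m + 1)
end

section
/- Let w be a right-infinite word over a finite alphabet. If w is not ultimately periodic, then p_w(n) ≥ n + 1 for all n ≥ 1. -/
/-- A finite word `u` is a subword (factor) of the right-infinite word `w` if
it occurs as a contiguous block of consecutive letters of `w`. -/
def IsFactor {A : Type*} (w : ℕ → A) (u : List A) : Prop :=
  ∃ i : ℕ, u = (List.range u.length).map fun j => w (i + j)

/-- The subword complexity of a right-infinite word `w`: the number of
distinct subwords of `w` of length `n`. -/
noncomputable def icomplexity {A : Type*} (w : ℕ → A) (n : ℕ) : ℕ :=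
  Set.ncard {u : List A | u.length = n ∧ IsFactor w u}

/-- A right-infinite word is ultimately periodic if from some point on it is
periodic with some period `p ≥ 1`. -/
def UltimatelyPeriodic {A : Type*} (w : ℕ → A) : Prop :=
  ∃ p, 1 ≤ p ∧ ∃ M, ∀ i, M ≤ i → w (i + p) = w i

/-!
Truncating the last letter maps the factors of length `m + 1` onto those of length `m`, so
`p(m) ≤ p(m + 1)`. If equality holds, the map is injective: every factor of length `m` has a
unique right extension, so the length-`m` factor at a position determines all later letters. As
there are finitely many factors of length `m`, one occurs at two positions `i < j`, and `w` is then
periodic with period `j - i` from `i` on. Hence for a non-ultimately periodic word `p` is strictly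
increasing, and `p(0) = 1` gives `p(n) ≥ n + 1`.
-/

section Factors

variable {A : Type*} (w : ℕ → A)

def factorAt (n i : ℕ) : List A := (List.range n).map fun j => w (i + j)

@[simp]
lemma length_factorAt (n i : ℕ) : (factorAt w n i).length = n := by
  simp [factorAt]

lemma factorAt_succ (n i : ℕ) : factorAt w (n + 1) i = w i :: factorAt w n (i + 1) := by
  simp [factorAt, List.range_succ_eq_map, Nat.add_comm 1, Nat.add_assoc]

lemma take_factorAt_succ (n i : ℕ) : (factorAt w (n + 1) i).take n = factorAt w n i := by
  simp [factorAt, ← List.map_take, List.take_range]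

lemma setOf_isFactor_eq_range (n : ℕ) :
    {u : List A | u.length = n ∧ IsFactor w u} = Set.range (factorAt w n) := by
  ext u
  constructor
  · rintro ⟨rfl, i, hi⟩
    exact ⟨i, hi.symm⟩
  · rintro ⟨i, rfl⟩
    exact ⟨length_factorAt w n i, i, by rw [length_factorAt]; rfl⟩

lemma icomplexity_eq_ncard_range (n : ℕ) :
    icomplexity w n = (Set.range (factorAt w n)).ncard := by
  rw [icomplexity, setOf_isFactor_eq_range]

lemma icomplexity_zero : icomplexity w 0 = 1 := by
  rw [icomplexity_eq_ncard_range, show factorAt w 0 = fun _ => [] from rfl, Set.range_const,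
    Set.ncard_singleton]

lemma finite_range_factorAt [Finite A] (n : ℕ) : (Set.range (factorAt w n)).Finite :=
  (List.finite_length_eq A n).subset <| Set.range_subset_iff.2 (length_factorAt w n)

lemma image_take_range_factorAt_succ (m : ℕ) :
    List.take m '' Set.range (factorAt w (m + 1)) = Set.range (factorAt w m) := by
  rw [← Set.range_comp]
  exact congrArg Set.range (funext (take_factorAt_succ w m))

variable {w} [Finite A]

lemma icomplexity_le_succ {m : ℕ} : icomplexity w m ≤ icomplexity w (m + 1) := by
  rw [icomplexity_eq_ncard_range, icomplexity_eq_ncard_range, ← image_take_range_factorAt_succ]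
  exact Set.ncard_image_le (finite_range_factorAt w (m + 1))

lemma factorAt_succ_eq_of_icomplexity_succ_le {m : ℕ}
    (hle : icomplexity w (m + 1) ≤ icomplexity w m) {i j : ℕ}
    (hij : factorAt w m i = factorAt w m j) :
    factorAt w (m + 1) i = factorAt w (m + 1) j := by
  have hinj : Set.InjOn (List.take m) (Set.range (factorAt w (m + 1))) := by
    refine Set.injOn_of_ncard_image_eq ?_ (finite_range_factorAt w (m + 1))
    rw [image_take_range_factorAt_succ, ← icomplexity_eq_ncard_range,
      ← icomplexity_eq_ncard_range]
    exact le_antisymm icomplexity_le_succ hle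
  exact hinj ⟨i, rfl⟩ ⟨j, rfl⟩ (by simpa only [take_factorAt_succ] using hij)

lemma ultimatelyPeriodic_of_factorAt_succ_determined {m : ℕ}
    (hdet : ∀ i j, factorAt w m i = factorAt w m j →
      factorAt w (m + 1) i = factorAt w (m + 1) j) :
    UltimatelyPeriodic w := by
  obtain ⟨i, -, j, -, hne, hij⟩ := Set.infinite_univ.exists_ne_map_eq_of_mapsTo
    (fun i _ => Set.mem_range_self i) (finite_range_factorAt w m)
  wlog hlt : i < j generalizing i j
  · exact this j i hne.symm hij.symm (by omega)
  have hshift : ∀ t, factorAt w m (i + t) = factorAt w m (j + t) := by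
    intro t
    induction t with
    | zero => exact hij
    | succ t ih =>
      have hext := hdet _ _ ih
      rw [factorAt_succ, factorAt_succ] at hext
      exact (List.cons_eq_cons.1 hext).2
  refine ⟨j - i, by omega, i, fun k hk => ?_⟩
  have hext := hdet _ _ (hshift (k - i))
  rw [factorAt_succ, factorAt_succ] at hext
  obtain ⟨hhead, -⟩ := List.cons_eq_cons.1 hext
  rw [show k + (j - i) = j + (k - i) by omega, ← hhead, Nat.add_sub_cancel' hk]

lemma icomplexity_lt_succ (h : ¬ UltimatelyPeriodic w) (m : ℕ) :
    icomplexity w m < icomplexity w (m + 1) := by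
  by_contra! hle
  exact h (ultimatelyPeriodic_of_factorAt_succ_determined fun _ _ =>
    factorAt_succ_eq_of_icomplexity_succ_le hle)

end Factors

theorem icomplexity_ge_of_not_ultimatelyPeriodic_general {A : Type*} [Fintype A]
    (w : ℕ → A) (h : ¬ UltimatelyPeriodic w) (n : ℕ) :
    n + 1 ≤ icomplexity w n := by
  induction n with
  | zero => rw [icomplexity_zero]
  | succ n ih => exact ih.trans_lt (icomplexity_lt_succ h n)

/-- If a right-infinite word `w` over a finite alphabet is not ultimately
periodic, then `p_w(n) ≥ n + 1` for all `n ≥ 1`. -/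
theorem icomplexity_ge_of_not_ultimatelyPeriodic {A : Type*} [Fintype A]
    (w : ℕ → A) (h : ¬ UltimatelyPeriodic w) (n : ℕ) (hn : 1 ≤ n) :
    n + 1 ≤ icomplexity w n :=
  icomplexity_ge_of_not_ultimatelyPeriodic_general w h n
end
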